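/- Let G = (V,E) be a directed mixed graph and suppose α is a potential parent of β in I(G). Let G⁺ be the DMG obtained from G by adding the directed edge α→β. Then I(G⁺) = I(G). -/

import Mathlib

/-!
Directed mixed graphs (DMGs) with μ-separation, following
Mogensen & Hansen, "Markov equivalence of marginalized local independence graphs".
-/

universe u

/-- A directed mixed graph on node set `V`: a set of directed edges (`dir a b`
meaning `a → b`) and a set of bidirected edges (`bi`, a symmetric relation since
bidirected edges are unordered pairs).  Loops are allowed. -/
structure DMG (V : Type u) where
  dir : V → V → Prop
  bi : V → V → Prop
  bi_symm : ∀ a b, bi a b → bi b a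

namespace DMG

variable {V : Type u}

/-- A single step of a walk: an edge instance together with the direction in
which it is traversed (this records, in particular, orientations of loops).
A directed edge has a tail at its source and a head at its target; a bidirected
edge has heads at both endpoints. -/
inductive Step (G : DMG V) : V → V → Type u
  | dirF : ∀ {a b : V}, G.dir a b → Step G a b
  | dirB : ∀ {a b : V}, G.dir b a → Step G a b
  | bid  : ∀ {a b : V}, G.bi a b → Step G a b

/-- Whether the step has a head (edge mark) at its start node. -/
def Step.headStart {G : DMG V} : ∀ {a b : V}, Step G a b → Bool
  | _, _, .dirF _ => false
  | _, _, .dirB _ => true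
  | _, _, .bid _ => true

/-- Whether the step has a head (edge mark) at its end node. -/
def Step.headEnd {G : DMG V} : ∀ {a b : V}, Step G a b → Bool
  | _, _, .dirF _ => true
  | _, _, .dirB _ => false
  | _, _, .bid _ => true

/-- The step traverses a bidirected edge. -/
def Step.IsBid {G : DMG V} {a b : V} : Step G a b → Prop
  | .bid _ => True
  | _ => False

/-- The step traverses a directed edge, forwards. -/
def Step.IsDirF {G : DMG V} {a b : V} : Step G a b → Prop
  | .dirF _ => True
  | _ => False

/-- The underlying edge of a step: a directed edge is the ordered pair
(tail, head); a bidirected edge is the unordered pair of its endpoints. -/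
def Step.edge {G : DMG V} : ∀ {a b : V}, Step G a b → (V × V) ⊕ (Sym2 V)
  | a, b, .dirF _ => Sum.inl (a, b)
  | a, b, .dirB _ => Sum.inl (b, a)
  | a, b, .bid _ => Sum.inr s(a, b)

/-- A walk in a DMG: an alternating sequence of nodes and edges, each edge
between its neighbouring nodes, with a chosen orientation of each edge
(in particular of each directed loop). -/
inductive Walk (G : DMG V) : V → V → Type u
  | nil (a : V) : Walk G a a
  | cons {a b c : V} (s : Step G a b) (w : Walk G b c) : Walk G a c

namespace Walk

variable {G : DMG V}

/-- A nontrivial walk contains at least one edge. -/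
def Nontrivial : ∀ {a b : V}, Walk G a b → Prop
  | _, _, .nil _ => False
  | _, _, .cons _ _ => True

/-- The list of nodes of a walk, in order (with multiplicity). -/
def nodes : ∀ {a b : V}, Walk G a b → List V
  | a, _, .nil _ => [a]
  | a, _, .cons _ w => a :: w.nodes

/-- The non-endpoint (internal) nodes of a walk, in order (with multiplicity). -/
def interior {a b : V} (w : Walk G a b) : List V :=
  (w.nodes.dropLast).drop 1

/-- The list of edges of a walk. -/
def edges : ∀ {a b : V}, Walk G a b → List ((V × V) ⊕ (Sym2 V))
  | _, _, .nil _ => []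
  | _, _, .cons s w => s.edge :: w.edges

/-- Whether the first edge of the walk has a head at the first node
(`false` for a trivial walk). -/
def firstHead : ∀ {a b : V}, Walk G a b → Bool
  | _, _, .nil _ => false
  | _, _, .cons s _ => s.headStart

/-- Whether the last edge of the walk has a head at the last node
(`false` for a trivial walk). -/
def lastHead : ∀ {a b : V}, Walk G a b → Bool
  | _, _, .nil _ => false
  | _, _, .cons s (.nil _) => s.headEnd
  | _, _, .cons _ (.cons t w) => lastHead (Walk.cons t w)

/-- Helper: conditions at all remaining internal node instances of a walk,
where `h` records whether the edge arriving at the current start node has a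
head there.  A node instance is a collider if both adjoining edges have a
head at it; a collider must lie in `Anc`, a noncollider must avoid `C`. -/
def openFrom (C Anc : Set V) : ∀ {a b : V}, Bool → Walk G a b → Prop
  | _, _, _, .nil _ => True
  | a, _, h, .cons s w =>
      (if h && s.headStart then a ∈ Anc else a ∉ C) ∧ openFrom C Anc s.headEnd w

/-- Helper: every remaining internal node instance which is a collider lies in `S`. -/
def collInFrom (S : Set V) : ∀ {a b : V}, Bool → Walk G a b → Prop
  | _, _, _, .nil _ => True
  | a, _, h, .cons s w =>
      ((h && s.headStart) = true → a ∈ S) ∧ collInFrom S s.headEnd w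

/-- Every collider (internal node instance with heads on both sides) of the
walk lies in `S`. -/
def CollidersIn (S : Set V) : ∀ {a b : V}, Walk G a b → Prop
  | _, _, .nil _ => True
  | _, _, .cons s w => collInFrom S s.headEnd w

/-- The walk has no colliders. -/
def NoColliders {a b : V} (w : Walk G a b) : Prop :=
  w.CollidersIn ∅

/-- Helper: every remaining internal node instance is a collider. -/
def allCollFrom : ∀ {a b : V}, Bool → Walk G a b → Prop
  | _, _, _, .nil _ => True
  | _, _, h, .cons s w => (h && s.headStart) = true ∧ allCollFrom s.headEnd w

/-- Every internal node instance of the walk is a collider (no noncolliders). -/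
def AllColliders : ∀ {a b : V}, Walk G a b → Prop
  | _, _, .nil _ => True
  | _, _, .cons s w => allCollFrom s.headEnd w

/-- Every edge of the walk is bidirected. -/
def AllBid : ∀ {a b : V}, Walk G a b → Prop
  | _, _, .nil _ => True
  | _, _, .cons s w => s.IsBid ∧ w.AllBid

/-- The walk consists of a directed first edge (pointing forwards) followed by
bidirected edges only (the form `α → β` or `α → γ₁ ↔ ⋯ ↔ γₙ ↔ β`). -/
def UniForm : ∀ {a b : V}, Walk G a b → Prop
  | _, _, .nil _ => False
  | _, _, .cons s w => s.IsDirF ∧ w.AllBid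

end Walk

/-- `a` is an ancestor of `b`: there is a (possibly trivial) directed path
from `a` to `b`. -/
def anc (G : DMG V) (a b : V) : Prop := Relation.ReflTransGen G.dir a b

/-- The set of ancestors of nodes of `C`. -/
def anSet (G : DMG V) (C : Set V) : Set V := {a | ∃ c ∈ C, G.anc a c}

/-- The walk is μ-connecting given `C`: it is nontrivial, its first node is not
in `C`, every collider lies in `An(C)`, no noncollider lies in `C`, and its
final edge has a head at the final node. -/
def Walk.MuConn {G : DMG V} (C : Set V) : ∀ {a b : V}, Walk G a b → Prop
  | _, _, .nil _ => False
  | a, _, .cons s w =>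
      a ∉ C ∧ Walk.openFrom C (G.anSet C) s.headEnd w ∧ (Walk.cons s w).lastHead = true

/-- `B` is μ-separated from `A` given `C` in `G`: there is no μ-connecting
walk from any node of `A` to any node of `B` given `C`. -/
def muSep (G : DMG V) (A B C : Set V) : Prop :=
  ∀ ⦃a b : V⦄, a ∈ A → b ∈ B → ∀ w : Walk G a b, ¬ w.MuConn C

/-- Two DMGs on the same node set are Markov equivalent: they induce the same
independence model via μ-separation, i.e. `I(G₁) = I(G₂)`. -/
def MarkovEq (G₁ G₂ : DMG V) : Prop :=
  ∀ A B C : Set V, muSep G₁ A B C ↔ muSep G₂ A B C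

/-- `b` is separable from `a` in `I(G)`: there is `C ⊆ V ∖ {a}` with
`⟨{a},{b} | C⟩ ∈ I(G)`. -/
def separable (G : DMG V) (a b : V) : Prop :=
  ∃ C : Set V, a ∉ C ∧ muSep G {a} {b} C

/-- `a ∈ u(b, I(G))`: `b` is inseparable from `a` in `I(G)`. -/
def inU (G : DMG V) (a b : V) : Prop := ¬ G.separable a b

/-- `G₁` is a subgraph of `G₂` (same node set, edge-set inclusion). -/
def Sub (G₁ G₂ : DMG V) : Prop :=
  (∀ a b, G₁.dir a b → G₂.dir a b) ∧ (∀ a b, G₁.bi a b → G₂.bi a b)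

/-- The DMG obtained by adding the directed edge `a → b`. -/
def addDir (G : DMG V) (a b : V) : DMG V where
  dir x y := G.dir x y ∨ (x = a ∧ y = b)
  bi := G.bi
  bi_symm := G.bi_symm

/-- The DMG obtained by adding the bidirected edge `a ↔ b`. -/
def addBi (G : DMG V) (a b : V) : DMG V where
  dir := G.dir
  bi x y := G.bi x y ∨ (x = a ∧ y = b) ∨ (x = b ∧ y = a)
  bi_symm x y h := by
    rcases h with h | h | h
    · exact Or.inl (G.bi_symm _ _ h)
    · exact Or.inr (Or.inr ⟨h.2, h.1⟩)
    · exact Or.inr (Or.inl ⟨h.2, h.1⟩)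

/-- The DMG obtained by removing the directed edge `a → b`. -/
def removeDir (G : DMG V) (a b : V) : DMG V where
  dir x y := G.dir x y ∧ ¬(x = a ∧ y = b)
  bi := G.bi
  bi_symm := G.bi_symm

/-- The DMG obtained by removing the bidirected edge `a ↔ b`. -/
def removeBi (G : DMG V) (a b : V) : DMG V where
  dir := G.dir
  bi x y := G.bi x y ∧ ¬((x = a ∧ y = b) ∨ (x = b ∧ y = a))
  bi_symm x y h := ⟨G.bi_symm _ _ h.1, fun hc => h.2 (by tauto)⟩

/-- The complete DMG: all directed and all bidirected edges present. -/
def IsComplete (G : DMG V) : Prop :=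
  (∀ a b, G.dir a b) ∧ (∀ a b, G.bi a b)

/-- A DMG is maximal if it is complete, or adding any (absent) edge changes the
induced independence model. -/
def IsMaximal (G : DMG V) : Prop :=
  G.IsComplete ∨
    ∀ a b : V, (¬ G.dir a b → ¬ MarkovEq (G.addDir a b) G) ∧
      (¬ G.bi a b → ¬ MarkovEq (G.addBi a b) G)

end DMG
namespace DMG

variable {V : Type u}

/-- An inducing path from `a` to `b`: a nontrivial path or cycle from `a` to
`b` with a head at `b`, with no noncolliders, and on which every node is an
ancestor of `a` or of `b`. -/
def IsInducingPath (G : DMG V) {a b : V} (w : Walk G a b) : Prop :=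
  w.Nontrivial ∧
  (w.nodes.Nodup ∨ (a = b ∧ w.nodes.dropLast.Nodup)) ∧
  w.lastHead = true ∧
  w.AllColliders ∧
  ∀ x ∈ w.nodes, G.anc x a ∨ G.anc x b

/-- A bidirected inducing path: an inducing path all of whose edges are bidirected. -/
def IsBidirectedIP (G : DMG V) {a b : V} (w : Walk G a b) : Prop :=
  G.IsInducingPath w ∧ w.AllBid

/-- A directed inducing path: an inducing path of the form `α → β` or
`α → γ₁ ↔ ⋯ ↔ γₙ ↔ β` with every `γᵢ` an ancestor of `β`. -/
def IsDirectedIP (G : DMG V) {a b : V} (w : Walk G a b) : Prop :=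
  G.IsInducingPath w ∧ w.UniForm ∧ ∀ x ∈ w.interior, G.anc x b

/-- There exists a nontrivial walk in `G` between `x` and `y` with no
colliders, all non-endpoint nodes in `M`, and with edge marks `hs` at `x`
(`true` = head) and `he` at `y`. -/
def ConnThrough (G : DMG V) (M : Set V) (x y : V) (hs he : Bool) : Prop :=
  ∃ w : Walk G x y, w.Nontrivial ∧ w.NoColliders ∧
    (∀ z ∈ w.interior, z ∈ M) ∧ w.firstHead = hs ∧ w.lastHead = he

/-- The latent projection `m(G, O)` of `G` on `O`: the DMG on node set `O`
having an edge (with given endpoint marks) between `α` and `β` if and only if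
`G` contains a nontrivial endpoint-identical walk between `α` and `β` with no
colliders and all non-endpoint nodes in `M = V ∖ O`. -/
def latentProj (G : DMG V) (O : Set V) : DMG {x : V // x ∈ O} where
  dir x y := ConnThrough G Oᶜ x.1 y.1 false true
  bi x y := ConnThrough G Oᶜ x.1 y.1 true true ∨ ConnThrough G Oᶜ y.1 x.1 true true
  bi_symm x y h := h.symm

/-- `x` is directedly collider-connected to `b`: there is a nontrivial walk
from `x` to `b` with a head at `b` on which every non-endpoint node is a
collider. -/
def dirCollConn (G : DMG V) (x b : V) : Prop :=
  ∃ w : Walk G x b, w.Nontrivial ∧ w.AllColliders ∧ w.lastHead = true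

/-- The set `D(a,b)` of nodes in `An({a,b})` directedly collider-connected to
`b`, except `a`. -/
def Dset (G : DMG V) (a b : V) : Set V :=
  {x | x ∈ G.anSet {a, b} ∧ G.dirCollConn x b} \ {a}

/-- `a` and `b` are potential siblings in the independence model `I(G)`. -/
def PotSib (G : DMG V) (a b : V) : Prop :=
  (G.inU b a ∧ G.inU a b) ∧
  (∀ (γ : V) (C : Set V), b ∈ C → muSep G {γ} {a} C → muSep G {γ} {b} C) ∧
  (∀ (γ : V) (C : Set V), a ∈ C → muSep G {γ} {b} C → muSep G {γ} {a} C)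

/-- `a` is a potential parent of `b` in the independence model `I(G)`. -/
def PotPar (G : DMG V) (a b : V) : Prop :=
  G.inU a b ∧
  (∀ (γ : V) (C : Set V), a ∉ C → muSep G {γ} {b} C → muSep G {γ} {a} C) ∧
  (∀ (γ δ : V) (C : Set V), a ∉ C → b ∈ C →
    muSep G {γ} {δ} C → muSep G {γ} {b} C ∨ muSep G {a} {δ} C) ∧
  (∀ (γ : V) (C : Set V), a ∉ C → muSep G {b} {γ} C → muSep G {b} {γ} (C ∪ {a}))

/-- The graph `N(I(G))`: directed edge `a → b` present iff `a` is a potential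
parent of `b` in `I(G)`, bidirected edge `a ↔ b` present iff `a` and `b` are
potential siblings in `I(G)` (potential siblinghood is symmetric). -/
def NGraph (G : DMG V) : DMG V where
  dir a b := G.PotPar a b
  bi a b := G.PotSib a b ∨ G.PotSib b a
  bi_symm _ _ h := h.symm

/-- A path is m-connecting given `C` if it is a path (no repeated nodes), no
noncollider on it is in `C` and every collider on it is in `An(C)`. -/
def Walk.MConn {G : DMG V} (C : Set V) : ∀ {a b : V}, Walk G a b → Prop
  | _, _, .nil _ => True
  | _, _, .cons s w =>
      (Walk.cons s w).nodes.Nodup ∧ Walk.openFrom C (G.anSet C) s.headEnd w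

/-- `A` and `B` are m-separated by `C`: there is no m-connecting path between
a node of `A` and a node of `B` given `C`. -/
def mSep (G : DMG V) (A B C : Set V) : Prop :=
  ∀ ⦃a b : V⦄, a ∈ A → b ∈ B →
    (∀ w : Walk G a b, ¬ w.MConn C) ∧ (∀ w : Walk G b a, ¬ w.MConn C)

/-- Auxiliary directed-edge relation of the `B`-history version of `G`. -/
def histDir (G : DMG V) (B : Set V) : (V ⊕ {x : V // x ∈ B}) → (V ⊕ {x : V // x ∈ B}) → Prop
  | .inl u, .inl v => G.dir u v
  | .inl u, .inr v => G.dir u v.1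
  | _, _ => False

/-- Auxiliary bidirected-edge relation of the `B`-history version of `G`. -/
def histBi (G : DMG V) (B : Set V) : (V ⊕ {x : V // x ∈ B}) → (V ⊕ {x : V // x ∈ B}) → Prop
  | .inl u, .inl v => G.bi u v
  | .inl u, .inr v => G.bi u v.1
  | .inr u, .inl v => G.bi u.1 v
  | .inr _, .inr _ => False

/-- The `B`-history version `G(B)` of `G`: node set `V ⊔ Bᵖ`, whose subgraph
on `V` is `G`, with additionally `α ↔ βᵖ` whenever `α ↔ β` in `G` and
`α → βᵖ` whenever `α → β` in `G` (for `α ∈ V`, `β ∈ B`). -/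
def hist (G : DMG V) (B : Set V) : DMG (V ⊕ {x : V // x ∈ B}) where
  dir := G.histDir B
  bi := G.histBi B
  bi_symm x y h := by
    cases x <;> cases y <;>
      simp only [histBi] at h ⊢ <;>
      first
        | exact G.bi_symm _ _ h
        | exact h

end DMG

/-!
Deleting the edge `a → b` can only destroy μ-connecting walks, so the point is that a walk from
`γ` to `δ` in `G⁺ = G + (a → b)` that is μ-connecting given `C` can be traded for one in `G`.
We induct on the number of traversals of the new edge. A forward traversal `a → b` is replaced
by a μ-connecting walk from `a` to `b` in `G`, which exists by (p1); if this makes `a` a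
collider, the part before `a` connects `γ` to `a`, hence to `b` by (p2). A backward traversal
`b ← a` leaves a μ-connecting walk from `a` to `δ`: if `b ∈ C`, (p3) applies; otherwise a walk
from `a` to `b`, reversed and followed by the walk from `a` to `δ`, connects `b` to `δ`, after
conditioning also on `a` (which (p4) undoes) in case `a` becomes a collider.

Once the new edge is gone, a collider may still be an ancestor of `C` only through `a → b`.
Such a collider is an ancestor of `a`, and detouring along a directed path down to `a` and back
splits the walk into connections from `γ` to `a` and from `a` to `δ`; with `b ∈ An(C)` these
combine by (p2)–(p4) into a connection from `γ` to `δ`.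
-/

namespace DMG

variable {V : Type u}

namespace Step

variable {G : DMG V}

def rev : ∀ {x y : V}, Step G x y → Step G y x
  | _, _, .dirF h => .dirB h
  | _, _, .dirB h => .dirF h
  | _, _, .bid h => .bid (G.bi_symm _ _ h)

@[simp] lemma headStart_rev {x y : V} (s : Step G x y) : s.rev.headStart = s.headEnd := by
  cases s <;> rfl

@[simp] lemma headEnd_rev {x y : V} (s : Step G x y) : s.rev.headEnd = s.headStart := by
  cases s <;> rfl

def mapSub {G' : DMG V} (hs : G.Sub G') : ∀ {x y : V}, Step G x y → Step G' x y
  | _, _, .dirF h => .dirF (hs.1 _ _ h)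
  | _, _, .dirB h => .dirB (hs.1 _ _ h)
  | _, _, .bid h => .bid (hs.2 _ _ h)

variable {G' : DMG V} (hs : G.Sub G')

@[simp] lemma headStart_mapSub {x y : V} (s : Step G x y) :
    (s.mapSub hs).headStart = s.headStart := by
  cases s <;> rfl

@[simp] lemma headEnd_mapSub {x y : V} (s : Step G x y) : (s.mapSub hs).headEnd = s.headEnd := by
  cases s <;> rfl

@[simp] lemma edge_mapSub {x y : V} (s : Step G x y) : (s.mapSub hs).edge = s.edge := by
  cases s <;> rfl

end Step

variable {G : DMG V} {a b : V} {C : Set V}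

lemma subset_anSet : C ⊆ G.anSet C :=
  fun c hc => ⟨c, hc, .refl⟩

lemma anSet_subset_of_sub {G' : DMG V} (hs : G.Sub G') : G.anSet C ⊆ G'.anSet C :=
  fun _ ⟨c, hc, h⟩ => ⟨c, hc, Relation.ReflTransGen.mono hs.1 _ _ h⟩

lemma sub_addDir (G : DMG V) (a b : V) : G.Sub (G.addDir a b) :=
  ⟨fun _ _ => Or.inl, fun _ _ => id⟩

lemma addDir_sub (hab : G.dir a b) : (G.addDir a b).Sub G :=
  ⟨fun _ _ h => h.elim id fun ⟨hx, hy⟩ => hx ▸ hy ▸ hab, fun _ _ => id⟩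

lemma anc_of_anc_addDir {x c : V} (h : (G.addDir a b).anc x c) :
    G.anc x c ∨ (G.anc x a ∧ G.anc b c) := by
  induction h using Relation.ReflTransGen.head_induction_on with
  | refl => exact Or.inl .refl
  | head hxy _ ih =>
    rcases hxy with hxy | ⟨rfl, rfl⟩
    · exact ih.imp (.head hxy) (And.imp_left (.head hxy))
    · exact Or.inr ⟨.refl, ih.elim id And.right⟩

lemma mem_anSet_of_mem_anSet_addDir {x : V} (h : x ∈ (G.addDir a b).anSet C) :
    x ∈ G.anSet C ∨ (G.anc x a ∧ b ∈ G.anSet C) := by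
  obtain ⟨c, hc, hxc⟩ := h
  exact (anc_of_anc_addDir hxc).imp (fun h => ⟨c, hc, h⟩) fun h => ⟨h.1, c, hc, h.2⟩

namespace Walk

def append : ∀ {x y z : V}, Walk G x y → Walk G y z → Walk G x z
  | _, _, _, .nil _, w₂ => w₂
  | _, _, _, .cons s w, w₂ => .cons s (append w w₂)

@[simp] lemma cons_append {x m y z : V} (s : Step G x m) (w : Walk G m y) (w₂ : Walk G y z) :
    (Walk.cons s w).append w₂ = .cons s (w.append w₂) := rfl

def reverse : ∀ {x y : V}, Walk G x y → Walk G y x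
  | _, _, .nil x => .nil x
  | _, _, .cons s w => w.reverse.append (.cons s.rev (.nil _))

def mapSub {G' : DMG V} (hs : G.Sub G') : ∀ {x y : V}, Walk G x y → Walk G' x y
  | _, _, .nil x => .nil x
  | _, _, .cons s w => .cons (s.mapSub hs) (w.mapSub hs)

/-- The mark at the final node of `w` of its last edge, or `h` if `w` is trivial. -/
def endMark : ∀ {x y : V}, Bool → Walk G x y → Bool
  | _, _, h, .nil _ => h
  | _, _, _, .cons s w => endMark s.headEnd w

@[simp] lemma endMark_nil {x : V} (h : Bool) : (Walk.nil (G := G) x).endMark h = h := rfl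

@[simp] lemma endMark_cons {x m y : V} (h : Bool) (s : Step G x m) (w : Walk G m y) :
    (Walk.cons s w).endMark h = w.endMark s.headEnd := rfl

lemma nontrivial_of_endMark {x y : V} {w : Walk G x y} {h : Bool} (hw : w.endMark h ≠ h) :
    w.Nontrivial := by
  cases w with
  | nil => exact hw rfl
  | cons => trivial

lemma endMark_of_nontrivial : ∀ {x y : V} {w : Walk G x y}, w.Nontrivial →
    ∀ h h' : Bool, w.endMark h = w.endMark h'
  | _, _, .cons _ _, _, _, _ => rfl

lemma lastHead_eq_endMark : ∀ {x y : V} (w : Walk G x y), w.lastHead = w.endMark false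
  | _, _, .nil _ => rfl
  | _, _, .cons _ (.nil _) => rfl
  | _, _, .cons _ (.cons t w) => lastHead_eq_endMark (.cons t w)

lemma endMark_eq_lastHead {x y : V} {w : Walk G x y} (hw : w.Nontrivial) (h : Bool) :
    w.endMark h = w.lastHead := by
  rw [lastHead_eq_endMark, endMark_of_nontrivial hw]

lemma nontrivial_of_lastHead {x y : V} {w : Walk G x y} (hw : w.lastHead = true) :
    w.Nontrivial :=
  nontrivial_of_endMark (h := false) (by simp [← lastHead_eq_endMark, hw])

lemma endMark_append : ∀ {x y z : V} (w₁ : Walk G x y) (w₂ : Walk G y z) (h : Bool),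
    (w₁.append w₂).endMark h = w₂.endMark (w₁.endMark h)
  | _, _, _, .nil _, _, _ => rfl
  | _, _, _, .cons s w, w₂, _ => endMark_append w w₂ s.headEnd

lemma lastHead_append {x y z : V} (w₁ : Walk G x y) (w₂ : Walk G y z) :
    (w₁.append w₂).lastHead = w₂.endMark w₁.lastHead := by
  rw [lastHead_eq_endMark, endMark_append, ← lastHead_eq_endMark]

lemma edges_append : ∀ {x y z : V} (w₁ : Walk G x y) (w₂ : Walk G y z),
    (w₁.append w₂).edges = w₁.edges ++ w₂.edges
  | _, _, _, .nil _, _ => rfl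
  | _, _, _, .cons s w, w₂ => congrArg (s.edge :: ·) (edges_append w w₂)

lemma nontrivial_reverse {x y : V} {w : Walk G x y} (hw : w.Nontrivial) :
    w.reverse.Nontrivial := by
  cases w with
  | nil => exact hw.elim
  | cons s w =>
    show (w.reverse.append _).Nontrivial
    cases w.reverse <;> trivial

lemma lastHead_reverse : ∀ {x y : V} (w : Walk G x y), w.reverse.lastHead = w.firstHead
  | _, _, .nil _ => rfl
  | _, _, .cons s w => by
    simp only [reverse, lastHead_append, endMark_cons, endMark_nil, Step.headEnd_rev, firstHead]

lemma nodes_ne_nil : ∀ {x y : V} (w : Walk G x y), w.nodes ≠ []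
  | _, _, .nil _ => List.cons_ne_nil _ _
  | _, _, .cons _ _ => List.cons_ne_nil _ _

lemma dropLast_nodes_cons {x m y : V} (s : Step G x m) (w : Walk G m y) :
    (Walk.cons s w).nodes.dropLast = x :: w.nodes.dropLast :=
  List.dropLast_cons_of_ne_nil (nodes_ne_nil w)

lemma interior_cons {x m y : V} (s : Step G x m) (w : Walk G m y) :
    (Walk.cons s w).interior = w.nodes.dropLast := by
  rw [interior, dropLast_nodes_cons]
  rfl

lemma exists_append_of_mem_dropLast_nodes {z : V} : ∀ {x y : V} (w : Walk G x y),
    z ∈ w.nodes.dropLast →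
      ∃ (w₁ : Walk G x z) (w₂ : Walk G z y), w = w₁.append w₂ ∧ w₂.Nontrivial ∧ z ∉ w₂.interior
  | _, _, .nil _, hz => absurd hz List.not_mem_nil
  | _, _, .cons s w, hz => by
    by_cases hw : z ∈ w.nodes.dropLast
    · obtain ⟨w₁, w₂, rfl, hnt, hz'⟩ := exists_append_of_mem_dropLast_nodes w hw
      exact ⟨.cons s w₁, w₂, rfl, hnt, hz'⟩
    · rw [dropLast_nodes_cons, List.mem_cons] at hz
      obtain rfl := hz.resolve_right hw
      exact ⟨.nil _, .cons s w, rfl, trivial, by rwa [interior_cons]⟩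

lemma exists_eq_append_cons_of_mem_edges {e : (V × V) ⊕ Sym2 V} :
    ∀ {x y : V} (w : Walk G x y), e ∈ w.edges →
      ∃ (u v : V) (w₁ : Walk G x u) (s : Step G u v) (w₂ : Walk G v y),
        w = w₁.append (.cons s w₂) ∧ s.edge = e
  | _, _, .nil _, he => absurd he List.not_mem_nil
  | _, _, .cons s w, he => by
    rcases List.mem_cons.1 he with rfl | he
    · exact ⟨_, _, .nil _, s, w, rfl, rfl⟩
    · obtain ⟨u, v, w₁, t, w₂, rfl, ht⟩ := exists_eq_append_cons_of_mem_edges w he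
      exact ⟨u, v, .cons s w₁, t, w₂, rfl, ht⟩

section mapSub

variable {G' : DMG V} (hs : G.Sub G')

@[simp] lemma mapSub_cons {x m y : V} (s : Step G x m) (w : Walk G m y) :
    (Walk.cons s w).mapSub hs = .cons (s.mapSub hs) (w.mapSub hs) := rfl

@[simp] lemma endMark_mapSub : ∀ {x y : V} (w : Walk G x y) (h : Bool),
    (w.mapSub hs).endMark h = w.endMark h
  | _, _, .nil _, _ => rfl
  | _, _, .cons s w, _ => by
    simp only [mapSub_cons, endMark_cons, Step.headEnd_mapSub, endMark_mapSub w]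

@[simp] lemma lastHead_mapSub {x y : V} (w : Walk G x y) :
    (w.mapSub hs).lastHead = w.lastHead := by
  rw [lastHead_eq_endMark, lastHead_eq_endMark, endMark_mapSub]

@[simp] lemma edges_mapSub : ∀ {x y : V} (w : Walk G x y), (w.mapSub hs).edges = w.edges
  | _, _, .nil _ => rfl
  | _, _, .cons s w => by simp only [mapSub_cons, edges, Step.edge_mapSub, edges_mapSub w]

end mapSub

/-! ### Open walks -/

section Open

variable {A : Set V}

def InteriorOpen (C A : Set V) : ∀ {x y : V}, Walk G x y → Prop
  | _, _, .nil _ => True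
  | _, _, .cons s w => openFrom C A s.headEnd w

/-- `w` is μ-connecting given `C` with colliders required to lie in `A` instead of `An(C)`.
The initial mark `false` makes the first node behave as a noncollider, so it must avoid `C`. -/
def MuConnRel (C A : Set V) {x y : V} (w : Walk G x y) : Prop :=
  openFrom C A false w ∧ w.lastHead = true

lemma openFrom_cons {x m y : V} (h : Bool) (s : Step G x m) (w : Walk G m y) :
    openFrom C A h (.cons s w) ↔
      (if (h && s.headStart) = true then x ∈ A else x ∉ C) ∧ openFrom C A s.headEnd w :=
  Iff.rfl

lemma openFrom_append : ∀ {x y z : V} (w₁ : Walk G x y) (w₂ : Walk G y z) (h : Bool),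
    openFrom C A h (w₁.append w₂) ↔ openFrom C A h w₁ ∧ openFrom C A (w₁.endMark h) w₂
  | _, _, _, .nil _, _, _ => ⟨fun h => ⟨trivial, h⟩, And.right⟩
  | _, _, _, .cons s w, w₂, h => by
    rw [cons_append, openFrom_cons, openFrom_cons, openFrom_append w w₂, endMark_cons, and_assoc]

lemma interiorOpen_of_openFrom {x y : V} {w : Walk G x y} {h : Bool} (hw : openFrom C A h w) :
    InteriorOpen C A w := by
  cases w with
  | nil => trivial
  | cons s w => exact hw.2

lemma openFrom_of_interiorOpen {x y : V} {w : Walk G x y} (h : Bool) (hw : InteriorOpen C A w)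
    (hA : (h && w.firstHead) = true → x ∈ A) (hC : (h && w.firstHead) = false → x ∉ C) :
    openFrom C A h w := by
  cases w with
  | nil => trivial
  | cons s w =>
    refine ⟨?_, hw⟩
    split
    · exact hA ‹_›
    · exact hC (Bool.eq_false_iff.2 ‹_›)

lemma not_mem_of_openFrom_false {x y : V} {w : Walk G x y} (hw : openFrom C A false w)
    (hnt : w.Nontrivial) : x ∉ C := by
  cases w with
  | nil => exact hnt.elim
  | cons s w => exact hw.1

lemma mem_of_openFrom_true {x y : V} {w : Walk G x y} (hw : openFrom C A true w)
    (hx : w.firstHead = true) : x ∈ A := by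
  cases w with
  | nil => exact absurd hx Bool.false_ne_true
  | cons s w => exact (if_pos hx ▸ hw.1 :)

lemma openFrom_of_openFrom_false {x y : V} {w : Walk G x y} (h : Bool)
    (hw : openFrom C A false w) (hA : (h && w.firstHead) = true → x ∈ A) :
    openFrom C A h w := by
  cases w with
  | nil => trivial
  | cons s w => exact openFrom_of_interiorOpen h hw.2 hA fun _ => hw.1

lemma openFrom_mono {A' : Set V} (hA : A ⊆ A') :
    ∀ {x y : V} {w : Walk G x y} {h : Bool}, openFrom C A h w → openFrom C A' h w
  | _, _, .nil _, _, _ => trivial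
  | _, _, .cons s w, h, hw => by
    obtain ⟨h₁, h₂⟩ := (openFrom_cons _ _ _).1 hw
    refine ⟨?_, openFrom_mono hA h₂⟩
    split
    · exact hA (by rwa [if_pos ‹_›] at h₁)
    · rwa [if_neg ‹_›] at h₁

lemma openFrom_union_singleton {A' : Set V} {z : V} (hA : A ⊆ A') :
    ∀ {x y : V} {w : Walk G x y} {h : Bool}, z ∉ w.nodes.dropLast →
      openFrom C A h w → openFrom (C ∪ {z}) A' h w
  | _, _, .nil _, _, _, _ => trivial
  | _, _, .cons s w, h, hz, hw => by
    rw [dropLast_nodes_cons, List.mem_cons, not_or] at hz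
    obtain ⟨h₁, h₂⟩ := (openFrom_cons _ _ _).1 hw
    refine ⟨?_, openFrom_union_singleton hA hz.2 h₂⟩
    split
    · exact hA (by rwa [if_pos ‹_›] at h₁)
    · rw [if_neg ‹_›] at h₁
      rintro (hx | hx)
      · exact h₁ hx
      · exact hz.1 hx.symm

lemma interiorOpen_union_singleton {A' : Set V} {z : V} (hA : A ⊆ A') {x y : V}
    {w : Walk G x y} (hz : z ∉ w.interior) (hw : InteriorOpen C A w) :
    InteriorOpen (C ∪ {z}) A' w := by
  cases w with
  | nil => trivial
  | cons s w => exact openFrom_union_singleton hA (by rwa [interior_cons] at hz) hw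

lemma interiorOpen_append {x y z : V} {w₁ : Walk G x y} (w₂ : Walk G y z)
    (hw₁ : w₁.Nontrivial) :
    InteriorOpen C A (w₁.append w₂) ↔ InteriorOpen C A w₁ ∧ openFrom C A w₁.lastHead w₂ := by
  cases w₁ with
  | nil => exact hw₁.elim
  | cons s w =>
    rw [cons_append, InteriorOpen, InteriorOpen, openFrom_append, lastHead_eq_endMark,
      endMark_cons]

lemma interiorOpen_reverse : ∀ {x y : V} (w : Walk G x y),
    InteriorOpen C A w.reverse ↔ InteriorOpen C A w
  | _, _, .nil _ => Iff.rfl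
  | _, _, .cons _ (.nil _) => ⟨fun _ => trivial, fun _ => trivial⟩
  | _, _, .cons s (.cons t w) => by
    have hnt : (Walk.cons t w).reverse.Nontrivial := nontrivial_reverse trivial
    rw [reverse, interiorOpen_append _ hnt, interiorOpen_reverse, lastHead_reverse]
    simp only [InteriorOpen, firstHead, Step.headStart_rev, Bool.and_comm, openFrom, and_true]
    exact and_comm

@[simp] lemma openFrom_mapSub {G' : DMG V} (hs : G.Sub G') :
    ∀ {x y : V} (w : Walk G x y) (h : Bool), openFrom C A h (w.mapSub hs) ↔ openFrom C A h w
  | _, _, .nil _, _ => Iff.rfl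
  | _, _, .cons s w, h => by
    rw [mapSub_cons, openFrom_cons, openFrom_cons, Step.headStart_mapSub, Step.headEnd_mapSub,
      openFrom_mapSub hs w]

lemma muConnRel_mapSub {G' : DMG V} (hs : G.Sub G') {x y : V} (w : Walk G x y) :
    MuConnRel C A (w.mapSub hs) ↔ MuConnRel C A w := by
  rw [MuConnRel, MuConnRel, openFrom_mapSub, lastHead_mapSub]

lemma muConn_iff_muConnRel {x y : V} (w : Walk G x y) :
    w.MuConn C ↔ MuConnRel C (G.anSet C) w := by
  cases w with
  | nil => exact ⟨False.elim, fun h => Bool.false_ne_true h.2⟩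
  | cons s w => exact and_assoc.symm

lemma MuConnRel.mono {A' : Set V} (hA : A ⊆ A') {x y : V} {w : Walk G x y}
    (hw : MuConnRel C A w) : MuConnRel C A' w :=
  ⟨openFrom_mono hA hw.1, hw.2⟩

lemma MuConnRel.not_mem {x y : V} {w : Walk G x y} (hw : MuConnRel C A w) : x ∉ C :=
  not_mem_of_openFrom_false hw.1 (nontrivial_of_lastHead hw.2)

lemma muConnRel_append_iff {x y z : V} (w₁ : Walk G x y) (w₂ : Walk G y z) :
    MuConnRel C A (w₁.append w₂) ↔
      openFrom C A false w₁ ∧ openFrom C A w₁.lastHead w₂ ∧ w₂.endMark w₁.lastHead = true := by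
  rw [MuConnRel, openFrom_append, lastHead_append, ← lastHead_eq_endMark, and_assoc]

/-- Cut `w` at the last visit of its initial node before the end. -/
lemma MuConnRel.exists_not_mem_interior {z y : V} {w : Walk G z y} (hw : MuConnRel C A w) :
    ∃ w' : Walk G z y, MuConnRel C A w' ∧ z ∉ w'.interior := by
  have hz : z ∈ w.nodes.dropLast := by
    cases w with
    | nil => exact (nontrivial_of_lastHead hw.2).elim
    | cons s w => exact (dropLast_nodes_cons s w).symm ▸ List.mem_cons_self
  obtain ⟨w₁, w₂, rfl, hnt, hz'⟩ := exists_append_of_mem_dropLast_nodes w hz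
  obtain ⟨-, hw₂, hlast⟩ := (muConnRel_append_iff w₁ w₂).1 hw
  refine ⟨w₂, ⟨?_, ?_⟩, hz'⟩
  · exact openFrom_of_interiorOpen false (interiorOpen_of_openFrom hw₂) (by simp)
      fun _ => hw.not_mem
  · rwa [endMark_eq_lastHead hnt] at hlast

lemma muConnRel_reverse_append {δ : V} {ρ : Walk G a b} {τ : Walk G a δ}
    (hρ : InteriorOpen C A ρ) (hτ : InteriorOpen C A τ) (hτ' : τ.lastHead = true) (hb : b ∉ C)
    (ha : if (ρ.firstHead && τ.firstHead) = true then a ∈ A else a ∉ C) :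
    MuConnRel C A (ρ.reverse.append τ) := by
  refine (muConnRel_append_iff _ _).2 ⟨?_, ?_, ?_⟩
  · exact openFrom_of_interiorOpen false ((interiorOpen_reverse ρ).2 hρ) (by simp) fun _ => hb
  · rw [lastHead_reverse]
    refine openFrom_of_interiorOpen _ hτ (fun hc => ?_) (fun hc => ?_)
    · rwa [if_pos hc] at ha
    · rwa [if_neg (Bool.eq_false_iff.1 hc)] at ha
  · rwa [endMark_eq_lastHead (nontrivial_of_lastHead hτ')]

lemma MuConn.mapSub {G' : DMG V} (hs : G.Sub G') {x y : V} {w : Walk G x y}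
    (hw : w.MuConn C) : (w.mapSub hs).MuConn C := by
  rw [muConn_iff_muConnRel] at hw ⊢
  exact ((muConnRel_mapSub hs w).2 hw).mono (anSet_subset_of_sub hs)

end Open

/-! ### Colliders outside a set, and directed paths -/

section Colliders

variable {S : Set V}

open Classical in
noncomputable def numCollidersNotIn (S : Set V) : ∀ {x y : V}, Bool → Walk G x y → ℕ
  | _, _, _, .nil _ => 0
  | x, _, h, .cons s w =>
    (if (h && s.headStart) = true ∧ x ∉ S then 1 else 0) + numCollidersNotIn S s.headEnd w

lemma numCollidersNotIn_append : ∀ {x y z : V} (w₁ : Walk G x y) (w₂ : Walk G y z) (h : Bool),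
    numCollidersNotIn S h (w₁.append w₂) =
      numCollidersNotIn S h w₁ + numCollidersNotIn S (w₁.endMark h) w₂
  | _, _, _, .nil _, _, _ => (zero_add _).symm
  | _, _, _, .cons s w, w₂, _ => by
    simp only [cons_append, numCollidersNotIn, numCollidersNotIn_append w w₂, endMark_cons,
      add_assoc]

lemma numCollidersNotIn_true {x y : V} {w : Walk G x y} (hw : w.firstHead = true) (hx : x ∉ S) :
    numCollidersNotIn S true w = numCollidersNotIn S false w + 1 := by
  cases w with
  | nil => exact absurd hw Bool.false_ne_true
  | cons s w =>
    simp only [firstHead] at hw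
    simp [numCollidersNotIn, hw, hx, add_comm]

lemma openFrom_of_numCollidersNotIn_eq_zero {A : Set V} :
    ∀ {x y : V} {w : Walk G x y} {h : Bool},
      openFrom C A h w → numCollidersNotIn S h w = 0 → openFrom C S h w
  | _, _, .nil _, _, _, _ => trivial
  | _, _, .cons s w, h, hw, hn => by
    obtain ⟨h₁, h₂⟩ := (openFrom_cons _ _ _).1 hw
    simp only [numCollidersNotIn, Nat.add_eq_zero_iff, ite_eq_right_iff, one_ne_zero,
      imp_false, not_and, not_not] at hn
    refine ⟨?_, openFrom_of_numCollidersNotIn_eq_zero h₂ hn.2⟩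
    split
    · exact hn.1 ‹_›
    · rwa [if_neg ‹_›] at h₁

lemma exists_append_of_numCollidersNotIn_pos : ∀ {x y : V} {w : Walk G x y} {h : Bool},
    0 < numCollidersNotIn S h w →
      ∃ (m : V) (w₁ : Walk G x m) (w₂ : Walk G m y), w = w₁.append w₂ ∧
        w₁.endMark h = true ∧ w₂.firstHead = true ∧ m ∉ S
  | _, _, .nil _, _, hn => absurd hn (lt_irrefl 0)
  | x, _, .cons s w, h, hn => by
    by_cases hx : (h && s.headStart) = true ∧ x ∉ S
    · rw [Bool.and_eq_true] at hx
      exact ⟨x, .nil x, .cons s w, rfl, hx.1.1, hx.1.2, hx.2⟩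
    · simp only [numCollidersNotIn, if_neg hx, zero_add] at hn
      obtain ⟨m, w₁, w₂, rfl, h₁, h₂, hm⟩ := exists_append_of_numCollidersNotIn_pos hn
      exact ⟨m, .cons s w₁, w₂, rfl, h₁, h₂, hm⟩

lemma exists_walk_down {x : V} (hxa : G.anc x a) (hx : x ∉ G.anSet C) :
    ∃ d : Walk G x a, (∀ A h, openFrom C A h d) ∧ d.endMark true = true ∧
      ∀ h, numCollidersNotIn S h d = 0 := by
  induction hxa using Relation.ReflTransGen.head_induction_on with
  | refl => exact ⟨.nil _, fun _ _ => trivial, rfl, fun _ => rfl⟩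
  | head hxy _ ih =>
    obtain ⟨d, h₁, h₂, h₃⟩ := ih fun ⟨c, hc, hyc⟩ => hx ⟨c, hc, .head hxy hyc⟩
    refine ⟨.cons (.dirF hxy) d, fun A h => ⟨?_, h₁ A _⟩, h₂, fun h => ?_⟩
    · rw [if_neg (by simp [Step.headStart])]
      exact fun hxC => hx (subset_anSet hxC)
    · simp [numCollidersNotIn, Step.headStart, Step.headEnd, h₃]

lemma exists_walk_up {x : V} (hxa : G.anc x a) (hx : x ∉ G.anSet C) :
    ∃ u : Walk G a x, (∀ A, openFrom C A false u) ∧ u.lastHead = false ∧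
      numCollidersNotIn S false u = 0 := by
  induction hxa with
  | refl => exact ⟨.nil _, fun _ => trivial, rfl, rfl⟩
  | tail hxb hbc ih =>
    obtain ⟨u, h₁, h₂, h₃⟩ := ih
    refine ⟨.cons (.dirB hbc) u, fun A => ⟨?_, h₁ A⟩, ?_, ?_⟩
    · exact fun hcC => hx ⟨_, hcC, .tail hxb hbc⟩
    · rw [lastHead_eq_endMark] at h₂ ⊢
      exact h₂
    · simpa [numCollidersNotIn, Step.headStart, Step.headEnd] using h₃

end Colliders

/-! ### Traversals of a directed edge -/

section Traversals

lemma not_mem_edges_of_not_dir (hab : ¬ G.dir a b) :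
    ∀ {x y : V} (w : Walk G x y), Sum.inl (a, b) ∉ w.edges
  | _, _, .nil _ => List.not_mem_nil
  | _, _, .cons s w => by
    rw [edges, List.mem_cons, not_or]
    refine ⟨?_, not_mem_edges_of_not_dir hab w⟩
    cases s <;> simp only [Step.edge, Sum.inl.injEq, Prod.mk.injEq, reduceCtorEq, not_false_eq_true]
      <;> rintro ⟨rfl, rfl⟩ <;> exact hab ‹_›

lemma exists_mapSub_eq_of_not_mem_edges :
    ∀ {x y : V} (w : Walk (G.addDir a b) x y), Sum.inl (a, b) ∉ w.edges →
      ∃ w' : Walk G x y, w'.mapSub (sub_addDir G a b) = w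
  | _, _, .nil x, _ => ⟨.nil x, rfl⟩
  | _, _, .cons s w, he => by
    rw [edges, List.mem_cons, not_or] at he
    obtain ⟨w', rfl⟩ := exists_mapSub_eq_of_not_mem_edges w he.2
    cases s with
    | dirF h =>
      exact ⟨.cons (.dirF (h.resolve_right fun ⟨hx, hy⟩ => he.1 (by subst hx hy; rfl))) w', rfl⟩
    | dirB h =>
      exact ⟨.cons (.dirB (h.resolve_right fun ⟨hx, hy⟩ => he.1 (by subst hx hy; rfl))) w', rfl⟩
    | bid h => exact ⟨.cons (.bid h) w', rfl⟩

variable [DecidableEq V]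

/-- Traversals of `a → b` are counted in both directions. -/
def countDir (a b : V) {x y : V} (w : Walk G x y) : ℕ :=
  w.edges.countP fun e => e = .inl (a, b)

lemma countDir_append {x y z : V} (w₁ : Walk G x y) (w₂ : Walk G y z) :
    (w₁.append w₂).countDir a b = w₁.countDir a b + w₂.countDir a b := by
  rw [countDir, edges_append, List.countP_append]
  rfl

lemma countDir_append_cons {x u v y : V} (w₁ : Walk G x u) (s : Step G u v) (w₂ : Walk G v y)
    (hs : s.edge = .inl (a, b)) :
    (w₁.append (.cons s w₂)).countDir a b = w₁.countDir a b + w₂.countDir a b + 1 := by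
  rw [countDir_append, countDir, countDir, countDir, edges, List.countP_cons, hs]
  simp only [decide_true, if_true]
  omega

lemma countDir_mapSub_addDir (hab : ¬ G.dir a b) {x y : V} (w : Walk G x y) :
    (w.mapSub (sub_addDir G a b)).countDir a b = 0 := by
  rw [countDir, edges_mapSub, List.countP_eq_zero]
  intro e he hea
  exact not_mem_edges_of_not_dir hab w (of_decide_eq_true hea ▸ he)

end Traversals

end Walk

open Walk

lemma muSep_of_sub {G' : DMG V} (hs : G.Sub G') {A B : Set V} (h : G'.muSep A B C) :
    G.muSep A B C :=
  fun _ _ hx hy _ hw => h hx hy _ (hw.mapSub hs)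

def MuConnected (G : DMG V) (C : Set V) (x y : V) : Prop :=
  ∃ w : Walk G x y, w.MuConn C

lemma muSep_singleton_iff {x y : V} : G.muSep {x} {y} C ↔ ¬ G.MuConnected C x y :=
  ⟨fun h ⟨w, hw⟩ => h rfl rfl w hw, by rintro h _ _ rfl rfl w hw; exact h ⟨w, hw⟩⟩

lemma MuConnected.exists_not_mem_interior {x y : V} (h : G.MuConnected C x y) :
    ∃ w : Walk G x y, MuConnRel C (G.anSet C) w ∧ x ∉ w.interior := by
  obtain ⟨w, hw⟩ := h
  exact ((muConn_iff_muConnRel w).1 hw).exists_not_mem_interior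

lemma MuConnected.trans {x y z : V} (h₁ : G.MuConnected C x y) (h₂ : G.MuConnected C y z)
    (hy : y ∈ G.anSet C) : G.MuConnected C x z := by
  obtain ⟨σ, hσ⟩ := h₁
  obtain ⟨τ, hτ⟩ := h₂
  rw [muConn_iff_muConnRel] at hσ hτ
  refine ⟨σ.append τ, (muConn_iff_muConnRel _).2 ((muConnRel_append_iff σ τ).2 ⟨hσ.1, ?_, ?_⟩)⟩
  · exact openFrom_of_openFrom_false _ hτ.1 fun _ => hy
  · rw [endMark_eq_lastHead (nontrivial_of_lastHead hτ.2)]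
    exact hτ.2

lemma MuConnected.exists_addDir [DecidableEq V] (hab : ¬ G.dir a b) {x y : V}
    (h : G.MuConnected C x y) :
    ∃ w : Walk (G.addDir a b) x y, w.countDir a b = 0 ∧
      MuConnRel C ((G.addDir a b).anSet C) w := by
  obtain ⟨w, hw⟩ := h
  exact ⟨w.mapSub _, countDir_mapSub_addDir hab w, (muConn_iff_muConnRel _).1 (hw.mapSub _)⟩

/-! ### Potential parents -/

namespace PotPar

lemma muConnected_parent_child (hp : G.PotPar a b) (ha : a ∉ C) : G.MuConnected C a b :=
  not_not.1 fun h => hp.1 ⟨C, ha, muSep_singleton_iff.2 h⟩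

lemma muConnected_to_child (hp : G.PotPar a b) (ha : a ∉ C) {γ : V}
    (h : G.MuConnected C γ a) : G.MuConnected C γ b :=
  not_not.1 fun hb => muSep_singleton_iff.1 (hp.2.1 γ C ha (muSep_singleton_iff.2 hb)) h

lemma muConnected_of_child_mem (hp : G.PotPar a b) (ha : a ∉ C) (hb : b ∈ C) {γ δ : V}
    (hγ : G.MuConnected C γ b) (hδ : G.MuConnected C a δ) : G.MuConnected C γ δ :=
  not_not.1 fun h => (hp.2.2.1 γ δ C ha hb (muSep_singleton_iff.2 h)).elim
    (fun h' => muSep_singleton_iff.1 h' hγ) (fun h' => muSep_singleton_iff.1 h' hδ)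

lemma muConnected_from_child_of_union (hp : G.PotPar a b) (ha : a ∉ C) {δ : V}
    (h : G.MuConnected (C ∪ {a}) b δ) : G.MuConnected C b δ :=
  not_not.1 fun h' => muSep_singleton_iff.1 (hp.2.2.2 δ C ha (muSep_singleton_iff.2 h')) h

/-- Reverse a walk from `a` to `b` and continue along one from `a` to `δ`; if that makes `a` a
collider, condition on `a` as well and remove it again by (p4). -/
lemma muConnected_from_child (hp : G.PotPar a b) (ha : a ∉ C) (hb : b ∉ C) {δ : V}
    (h : G.MuConnected C a δ) : G.MuConnected C b δ := by
  rcases eq_or_ne a b with rfl | hne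
  · exact h
  obtain ⟨ρ, hρ, hρa⟩ := (hp.muConnected_parent_child ha).exists_not_mem_interior
  obtain ⟨τ, hτ, hτa⟩ := h.exists_not_mem_interior
  by_cases hcoll : (ρ.firstHead && τ.firstHead) = true
  · have hA : G.anSet C ⊆ G.anSet (C ∪ {a}) := fun x ⟨c, hc, hxc⟩ => ⟨c, Or.inl hc, hxc⟩
    have hρ' := interiorOpen_union_singleton hA hρa (interiorOpen_of_openFrom hρ.1)
    have hτ' := interiorOpen_union_singleton hA hτa (interiorOpen_of_openFrom hτ.1)
    refine hp.muConnected_from_child_of_union ha ⟨ρ.reverse.append τ,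
      (muConn_iff_muConnRel _).2 (muConnRel_reverse_append hρ' hτ' hτ.2 ?_ ?_)⟩
    · rintro (hbC | rfl)
      exacts [hb hbC, hne rfl]
    · rw [if_pos hcoll]
      exact subset_anSet (Or.inr rfl)
  · refine ⟨ρ.reverse.append τ, (muConn_iff_muConnRel _).2 (muConnRel_reverse_append
      (interiorOpen_of_openFrom hρ.1) (interiorOpen_of_openFrom hτ.1) hτ.2 hb ?_)⟩
    rwa [if_neg hcoll]

lemma muConnected_via_parent (hp : G.PotPar a b) (ha : a ∉ C) (hb : b ∈ G.anSet C) {γ δ : V}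
    (hγ : G.MuConnected C γ a) (hδ : G.MuConnected C a δ) : G.MuConnected C γ δ := by
  have hγb := hp.muConnected_to_child ha hγ
  by_cases hbC : b ∈ C
  · exact hp.muConnected_of_child_mem ha hbC hγb hδ
  · exact hγb.trans (hp.muConnected_from_child ha hbC hδ) hb

lemma muConnected_of_collider_not_mem_anSet (hp : G.PotPar a b) {γ m δ : V}
    {w₁ : Walk G γ m} {w₂ : Walk G m δ}
    (hw : MuConnRel C ((G.addDir a b).anSet C) (w₁.append w₂))
    (h₁ : w₁.lastHead = true) (h₂ : w₂.firstHead = true) (hm : m ∉ G.anSet C)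
    (ih : ∀ {x y : V} (w : Walk G x y), numCollidersNotIn (G.anSet C) false w <
        numCollidersNotIn (G.anSet C) false (w₁.append w₂) →
      MuConnRel C ((G.addDir a b).anSet C) w → G.MuConnected C x y) :
    G.MuConnected C γ δ := by
  obtain ⟨hw₁, hw₂, hlast⟩ := (muConnRel_append_iff w₁ w₂).1 hw
  rw [h₁] at hw₂ hlast
  obtain ⟨hma, hb⟩ :=
    (mem_anSet_of_mem_anSet_addDir (mem_of_openFrom_true hw₂ h₂)).resolve_left hm
  have ha : a ∉ C := fun haC => hm ⟨a, haC, hma⟩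
  obtain ⟨d, hd₁, hd₂, hd₃⟩ := exists_walk_down (S := G.anSet C) hma hm
  obtain ⟨u, hu₁, hu₂, hu₃⟩ := exists_walk_up (S := G.anSet C) hma hm
  have hnt₂ : w₂.Nontrivial := by cases w₂ <;> trivial
  have hcount := numCollidersNotIn_append (S := G.anSet C) w₁ w₂ false
  rw [← lastHead_eq_endMark, h₁, numCollidersNotIn_true h₂ hm] at hcount
  refine hp.muConnected_via_parent ha hb (ih (w₁.append d) ?_ ?_) (ih (u.append w₂) ?_ ?_)
  · rw [numCollidersNotIn_append, hd₃, hcount]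
    omega
  · exact (muConnRel_append_iff _ _).2 ⟨hw₁, h₁ ▸ hd₁ _ _, h₁ ▸ hd₂⟩
  · rw [numCollidersNotIn_append, hu₃, ← lastHead_eq_endMark, hu₂, hcount]
    omega
  · refine (muConnRel_append_iff _ _).2 ⟨hu₁ _, ?_, ?_⟩
    · rw [hu₂]
      exact openFrom_of_interiorOpen false (interiorOpen_of_openFrom hw₂) (by simp)
        fun _ hmC => hm (subset_anSet hmC)
    · rwa [endMark_of_nontrivial hnt₂ _ true]

lemma muConnected_of_muConnRel_addDir (hp : G.PotPar a b) {γ δ : V} (w : Walk G γ δ)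
    (hw : MuConnRel C ((G.addDir a b).anSet C) w) : G.MuConnected C γ δ := by
  induction hn : numCollidersNotIn (G.anSet C) false w using Nat.strong_induction_on
    generalizing γ δ with
  | _ n ih =>
  rcases Nat.eq_zero_or_pos n with rfl | hpos
  · exact ⟨w, (muConn_iff_muConnRel w).2 ⟨openFrom_of_numCollidersNotIn_eq_zero hw.1 hn, hw.2⟩⟩
  obtain ⟨m, w₁, w₂, rfl, h₁, h₂, hm⟩ := exists_append_of_numCollidersNotIn_pos (hn ▸ hpos)
  rw [← lastHead_eq_endMark] at h₁
  exact hp.muConnected_of_collider_not_mem_anSet hw h₁ h₂ hm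
    fun w' hlt hw' => ih _ (hn ▸ hlt) w' hw' rfl

/-- Replace the edge by a walk from `a` to `b` in `G`; if that makes `a` a collider, connect `γ`
to `a` instead, hence to `b` by (p2). -/
lemma muConnected_of_append_dirF [DecidableEq V] (hp : G.PotPar a b) (hab : ¬ G.dir a b)
    {γ δ : V} {w₁ : Walk (G.addDir a b) γ a} {w₂ : Walk (G.addDir a b) b δ}
    {h : (G.addDir a b).dir a b} (hw : (w₁.append (.cons (.dirF h) w₂)).MuConn C)
    (ih : ∀ {x y : V} (w : Walk (G.addDir a b) x y),
      w.countDir a b ≤ w₁.countDir a b + w₂.countDir a b → w.MuConn C → G.MuConnected C x y) :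
    G.MuConnected C γ δ := by
  rw [muConn_iff_muConnRel, muConnRel_append_iff] at hw
  obtain ⟨hw₁, ⟨ha, hw₂⟩, hlast⟩ := hw
  simp only [Step.headStart, Step.headEnd, Bool.and_false, Bool.false_eq_true, if_false,
    endMark_cons] at ha hw₂ hlast
  obtain ⟨ρ, hρ0, hρ⟩ := (hp.muConnected_parent_child ha).exists_addDir hab
  by_cases hcoll : (w₁.lastHead && ρ.firstHead) = true
  · rw [Bool.and_eq_true] at hcoll
    obtain ⟨σ, hσ0, hσ⟩ := (hp.muConnected_to_child ha
      (ih w₁ (by omega) ((muConn_iff_muConnRel _).2 ⟨hw₁, hcoll.1⟩))).exists_addDir hab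
    refine ih (σ.append w₂) ?_ ((muConn_iff_muConnRel _).2
      ((muConnRel_append_iff _ _).2 ⟨hσ.1, hσ.2 ▸ hw₂, hσ.2 ▸ hlast⟩))
    rw [countDir_append, hσ0]
    omega
  · have hρ₂ : ρ.endMark w₁.lastHead = true := by
      rw [endMark_eq_lastHead (nontrivial_of_lastHead hρ.2), hρ.2]
    refine ih (w₁.append (ρ.append w₂)) ?_ ((muConn_iff_muConnRel _).2
      ((muConnRel_append_iff _ _).2 ⟨hw₁, ?_, ?_⟩))
    · rw [countDir_append, countDir_append, hρ0]
      omega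
    · exact (openFrom_append _ _ _).2
        ⟨openFrom_of_openFrom_false _ hρ.1 fun hc => absurd hc hcoll, hρ₂ ▸ hw₂⟩
    · rwa [endMark_append, hρ₂]

lemma muConnected_of_append_dirB [DecidableEq V] (hp : G.PotPar a b) (hab : ¬ G.dir a b)
    {γ δ : V} {w₁ : Walk (G.addDir a b) γ b} {w₂ : Walk (G.addDir a b) a δ}
    {h : (G.addDir a b).dir a b} (hw : (w₁.append (.cons (.dirB h) w₂)).MuConn C)
    (ih : ∀ {x y : V} (w : Walk (G.addDir a b) x y),
      w.countDir a b ≤ w₁.countDir a b + w₂.countDir a b → w.MuConn C → G.MuConnected C x y) :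
    G.MuConnected C γ δ := by
  rw [muConn_iff_muConnRel, muConnRel_append_iff] at hw
  obtain ⟨hw₁, ⟨hb, hw₂⟩, hlast⟩ := hw
  simp only [Step.headStart, Step.headEnd, Bool.and_true, endMark_cons] at hb hw₂ hlast
  rw [← lastHead_eq_endMark] at hlast
  have ha : a ∉ C := MuConnRel.not_mem ⟨hw₂, hlast⟩
  have hδ := ih w₂ (by omega) ((muConn_iff_muConnRel _).2 ⟨hw₂, hlast⟩)
  by_cases hbC : b ∈ C
  · have h₁ : w₁.lastHead = true := by
      by_contra h₁
      rw [if_neg h₁] at hb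
      exact hb hbC
    exact hp.muConnected_of_child_mem ha hbC
      (ih w₁ (by omega) ((muConn_iff_muConnRel _).2 ⟨hw₁, h₁⟩)) hδ
  · obtain ⟨κ, hκ0, hκ⟩ := (hp.muConnected_from_child ha hbC hδ).exists_addDir hab
    refine ih (w₁.append κ) ?_ ((muConn_iff_muConnRel _).2
      ((muConnRel_append_iff _ _).2 ⟨hw₁, ?_, ?_⟩))
    · rw [countDir_append, hκ0]
      omega
    · refine openFrom_of_openFrom_false _ hκ.1 fun hc => ?_
      rw [Bool.and_eq_true] at hc
      rwa [if_pos hc.1] at hb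
    · rw [endMark_eq_lastHead (nontrivial_of_lastHead hκ.2)]
      exact hκ.2

lemma muConnected_of_muConn_addDir (hp : G.PotPar a b) (hab : ¬ G.dir a b) {γ δ : V}
    (w : Walk (G.addDir a b) γ δ) (hw : w.MuConn C) : G.MuConnected C γ δ := by
  classical
  induction hn : w.countDir a b using Nat.strong_induction_on generalizing γ δ with
  | _ n ih =>
  by_cases he : Sum.inl (a, b) ∈ w.edges
  · obtain ⟨u, v, w₁, s, w₂, rfl, hs⟩ := exists_eq_append_cons_of_mem_edges w he
    rw [countDir_append_cons w₁ s w₂ hs] at hn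
    have ih' {x y : V} (w : Walk (G.addDir a b) x y)
        (hle : w.countDir a b ≤ w₁.countDir a b + w₂.countDir a b) (hw : w.MuConn C) :
        G.MuConnected C x y :=
      ih _ (by omega) w hw rfl
    cases s with
    | dirF h =>
      obtain ⟨rfl, rfl⟩ : u = a ∧ v = b := by simpa [Step.edge] using hs
      exact hp.muConnected_of_append_dirF hab hw ih'
    | dirB h =>
      obtain ⟨rfl, rfl⟩ : v = a ∧ u = b := by simpa [Step.edge] using hs
      exact hp.muConnected_of_append_dirB hab hw ih'
    | bid h => exact absurd hs (by simp [Step.edge])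
  · obtain ⟨w', rfl⟩ := exists_mapSub_eq_of_not_mem_edges w he
    exact hp.muConnected_of_muConnRel_addDir w'
      ((muConnRel_mapSub _ w').1 ((muConn_iff_muConnRel _).1 hw))

end PotPar

end DMG

theorem stmt15_general {V : Type u} (G : DMG V) (a b : V)
    (h : G.PotPar a b) :
    DMG.MarkovEq (G.addDir a b) G := by
  intro A B C
  refine ⟨DMG.muSep_of_sub (DMG.sub_addDir G a b), fun hsep => ?_⟩
  by_cases hab : G.dir a b
  · exact DMG.muSep_of_sub (DMG.addDir_sub hab) hsep
  · intro x y hx hy w hw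
    obtain ⟨w', hw'⟩ := h.muConnected_of_muConn_addDir hab w hw
    exact hsep hx hy w' hw'

/-- Lemma 2: if `a` is a potential parent of `b` in
`I(G)`, then adding the directed edge `a → b` yields a Markov equivalent
graph: `I(G⁺) = I(G)`. -/
theorem stmt15 {V : Type u} [Fintype V] (G : DMG V) (a b : V)
    (h : G.PotPar a b) :
    DMG.MarkovEq (G.addDir a b) G :=
  stmt15_general G a b h
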